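/- Let σ, ν be Minkowski velocities with ⟨σ,ν+σ⟩ ≠ 0. Then the passive covariant Lorentz boost is a Lorentz transformation, i.e. it preserves the Minkowski bilinear form: for all μ₁, μ₂ ∈ ℝ⁴, ⟨Lp(σ,ν)μ₁, Lp(σ,ν)μ₂⟩ = ⟨μ₁, μ₂⟩. -/

import Mathlib

/-!
Put `w = ν + σ`. Since `⟨σ, σ⟩ = ⟨ν, ν⟩`, we have `⟨w, w⟩ = 2⟨σ, w⟩`, so
`μ ↦ μ - (⟨μ, w⟩ / ⟨σ, w⟩) w` is the reflection in `w`. That reflection turns `⟨·, σ⟩` into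
`-⟨·, ν⟩`, so adding `(2⟨μ, ν⟩ / c²) σ` is the subsequent reflection in `σ`. A reflection in a
non-null vector preserves the form, hence so does the boost.
-/

noncomputable section

/-- Minkowski bilinear form on ℝ⁴ with signature +−−−. -/
def mink (u v : Fin 4 → ℝ) : ℝ := u 0 * v 0 - u 1 * v 1 - u 2 * v 2 - u 3 * v 3

/-- Passive covariant Lorentz boost determined by Minkowski velocities σ, ν. -/
def Lp (c : ℝ) (σ ν μ : Fin 4 → ℝ) : Fin 4 → ℝ :=
  μ - (mink μ (ν + σ) / mink σ (ν + σ)) • (ν + σ) + (2 * mink μ ν / c ^ 2) • σ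

namespace LinearMap.BilinForm

variable {K V : Type*} [Field K] [AddCommGroup V] [Module K V] {B : LinearMap.BilinForm K V}

variable (B) in
def reflect (a x : V) : V := x - (2 * B x a / B a a) • a

theorem apply_reflect_reflect (hB : B.IsSymm) {a : V} (ha : B a a ≠ 0) (x y : V) :
    B (B.reflect a x) (B.reflect a y) = B x y := by
  simp only [reflect, map_sub, map_smul, LinearMap.sub_apply, LinearMap.smul_apply, smul_eq_mul,
    hB.eq a y]
  field_simp
  ring

theorem apply_add_self_add (hB : B.IsSymm) {σ ν : V} (h : B σ σ = B ν ν) :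
    B (ν + σ) (ν + σ) = 2 * B σ (ν + σ) := by
  simp only [map_add, LinearMap.add_apply, hB.eq ν σ, h]
  ring

variable [NeZero (2 : K)]

theorem apply_reflect_add_self_right (hB : B.IsSymm) {σ ν : V} (h : B σ σ = B ν ν)
    (hσν : B σ (ν + σ) ≠ 0) (μ : V) :
    B (B.reflect (ν + σ) μ) σ = -B μ ν := by
  rw [reflect, map_sub, map_smul, LinearMap.sub_apply, LinearMap.smul_apply, smul_eq_mul,
    hB.eq (ν + σ) σ, apply_add_self_add hB h, mul_div_mul_left _ _ two_ne_zero,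
    div_mul_cancel₀ _ hσν, map_add]
  ring

theorem reflect_reflect_add_self (hB : B.IsSymm) {q : K} {σ ν : V} (hσ : B σ σ = q)
    (hν : B ν ν = q) (hσν : B σ (ν + σ) ≠ 0) (μ : V) :
    B.reflect σ (B.reflect (ν + σ) μ) =
      μ - (B μ (ν + σ) / B σ (ν + σ)) • (ν + σ) + (2 * B μ ν / q) • σ := by
  rw [reflect, apply_reflect_add_self_right hB (hσ.trans hν.symm) hσν, reflect,
    apply_add_self_add hB (hσ.trans hν.symm), hσ, mul_div_mul_left _ _ two_ne_zero, mul_neg,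
    neg_div, neg_smul, sub_neg_eq_add]

end LinearMap.BilinForm

open LinearMap.BilinForm

def minkForm : LinearMap.BilinForm ℝ (Fin 4 → ℝ) :=
  LinearMap.mk₂ ℝ mink
    (fun u v w => by simp only [mink, Pi.add_apply]; ring)
    (fun a u v => by simp only [mink, Pi.smul_apply, smul_eq_mul]; ring)
    (fun u v w => by simp only [mink, Pi.add_apply]; ring)
    (fun a u v => by simp only [mink, Pi.smul_apply, smul_eq_mul]; ring)

theorem minkForm_apply (u v : Fin 4 → ℝ) : minkForm u v = mink u v := rfl

theorem minkForm_isSymm : minkForm.IsSymm :=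
  ⟨fun u v => by simp only [minkForm_apply, mink]; ring⟩

theorem boost_preserves_form (c : ℝ) (hc : 0 < c) (σ ν : Fin 4 → ℝ)
    (hσ : mink σ σ = c ^ 2) (hν : mink ν ν = c ^ 2)
    (hσνσ : mink σ (ν + σ) ≠ 0) :
    ∀ μ₁ μ₂ : Fin 4 → ℝ, mink (Lp c σ ν μ₁) (Lp c σ ν μ₂) = mink μ₁ μ₂ := by
  intro μ₁ μ₂
  have hLp (μ : Fin 4 → ℝ) : Lp c σ ν μ = minkForm.reflect σ (minkForm.reflect (ν + σ) μ) :=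
    (reflect_reflect_add_self minkForm_isSymm hσ hν hσνσ μ).symm
  have hσσ : minkForm σ σ ≠ 0 := by rw [minkForm_apply, hσ]; positivity
  have hww : minkForm (ν + σ) (ν + σ) ≠ 0 := by
    rw [apply_add_self_add minkForm_isSymm (hσ.trans hν.symm)]
    exact mul_ne_zero two_ne_zero hσνσ
  rw [← minkForm_apply, hLp, hLp, apply_reflect_reflect minkForm_isSymm hσσ,
    apply_reflect_reflect minkForm_isSymm hww, minkForm_apply]
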